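/- arXiv:1203.0793 — 2 statements merged into one kernel-verified Lean document; each statement's English description precedes it below -/
import Mathlib

section
/- Let D* be the infimum of all constants D ≥ 0 such that for all real numbers a, b, c one has (|a|^{4/3} + |b|^{4/3} + |c|^{4/3})^{3/4} ≤ D · sup{|a x² + b y² + c xy| : (x,y) ∈ [−1,1]²}. Then D* = sup{ (2 t^{4/3} + (2√(t(1−t)))^{4/3})^{3/4} : t ∈ [1/2, 1] } (≈ 1.8374). -/
open Set
open Real


noncomputable def gg (t : ℝ) : ℝ :=
  2 * t ^ (4/3:ℝ) + (2 * Real.sqrt (t * (1 - t))) ^ (4/3:ℝ)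

lemma gg_one : gg 1 = 2 := by
  simp [gg, Real.zero_rpow]

lemma rpow_le_self' {x : ℝ} (h0 : 0 ≤ x) (h1 : x ≤ 1) : x ^ (4/3:ℝ) ≤ x := by
  rcases eq_or_lt_of_le h0 with h | h
  · rw [← h, Real.zero_rpow (by norm_num)]
  · nth_rewrite 2 [← Real.rpow_one x]
    exact Real.rpow_le_rpow_of_exponent_ge h h1 (by norm_num)

lemma extremal_bound {t x y : ℝ} (ht1 : 1/2 ≤ t) (ht2 : t ≤ 1)
    (hx : |x| ≤ 1) (hy : |y| ≤ 1) :
    |t * x^2 + (-t) * y^2 + (2 * Real.sqrt (t * (1-t))) * x * y| ≤ 1 := by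
  have htt : 0 ≤ t * (1 - t) := by nlinarith
  set s := Real.sqrt (t * (1-t)) with hs
  have hs2 : s^2 = t * (1-t) := Real.sq_sqrt htt
  rw [abs_le] at hx hy ⊢
  have hx2 : x^2 ≤ 1 := by nlinarith [hx.1, hx.2]
  have hy2 : y^2 ≤ 1 := by nlinarith [hy.1, hy.2]
  have ht0 : 0 < t := by linarith
  constructor
  · have key : t * (1 + (t * x^2 + (-t) * y^2 + (2*s) * x * y)) =
        t*(1 - y^2) + (t*x + s*y)^2 := by linear_combination (-(y^2)) * hs2
    nlinarith [sq_nonneg (t*x + s*y), mul_nonneg ht0.le (sub_nonneg.mpr hy2)]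
  · have key : t * (1 - (t * x^2 + (-t) * y^2 + (2*s) * x * y)) =
        t*(1 - x^2) + (t*y - s*x)^2 := by linear_combination (-(x^2)) * hs2
    nlinarith [sq_nonneg (t*y - s*x), mul_nonneg ht0.le (sub_nonneg.mpr hx2)]

set_option maxHeartbeats 2000000 in
lemma core {a b c : ℝ} (hba : |b| ≤ |a|)
    (hpt : ∀ x y : ℝ, |x| ≤ 1 → |y| ≤ 1 → |a*x^2 + b*y^2 + c*x*y| ≤ 1) :
    ∃ t : ℝ, 1/2 ≤ t ∧ t ≤ 1 ∧
      |a| ^ (4/3:ℝ) + |b| ^ (4/3:ℝ) + |c| ^ (4/3:ℝ) ≤ gg t := by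
  have h11 := hpt 1 1 (by norm_num) (by norm_num)
  have h1m := hpt 1 (-1) (by norm_num) (by norm_num)
  have ha1' := hpt 1 0 (by norm_num) (by norm_num)
  rw [show a*1^2 + b*1^2 + c*1*1 = a + b + c by ring] at h11
  rw [show a*1^2 + b*(-1)^2 + c*1*(-1) = a + b - c by ring] at h1m
  rw [show a*1^2 + b*0^2 + c*1*0 = a by ring] at ha1'
  have ha1 : |a| ≤ 1 := ha1'
  have hb1 : |b| ≤ 1 := hba.trans ha1
  have h3 : |a + b| + |c| ≤ 1 := by
    rw [abs_le] at h11 h1m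
    rcases abs_cases (a + b) with ⟨h, _⟩ | ⟨h, _⟩ <;>
      rcases abs_cases c with ⟨h2, _⟩ | ⟨h2, _⟩ <;> rw [h, h2] <;> linarith
  have hc1 : |c| ≤ 1 := by have := abs_nonneg (a + b); linarith
  rcases le_or_gt 0 (a * b) with hab | hab
  · -- same sign: easy
    have habs : |a + b| = |a| + |b| := by
      rcases le_or_gt 0 a with ha | ha <;> rcases le_or_gt 0 b with hb | hb
      · rw [abs_of_nonneg ha, abs_of_nonneg hb, abs_of_nonneg (by linarith)]
      · have ha0 : a = 0 := by nlinarith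
        rw [ha0]; simp
      · have hb0 : b = 0 := by nlinarith
        rw [hb0]; simp
      · rw [abs_of_neg ha, abs_of_neg hb, abs_of_neg (by linarith)]; ring
    refine ⟨1, by norm_num, le_refl 1, ?_⟩
    rw [gg_one]
    have l1 := rpow_le_self' (abs_nonneg a) ha1
    have l2 := rpow_le_self' (abs_nonneg b) hb1
    have l3 := rpow_le_self' (abs_nonneg c) hc1
    rw [habs] at h3
    linarith
  · -- opposite signs
    have habs : |a + b| = |a| - |b| := by
      rcases mul_neg_iff.mp hab with ⟨ha, hb⟩ | ⟨ha, hb⟩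
      · rw [abs_of_pos ha, abs_of_neg hb] at hba ⊢
        rw [abs_of_nonneg (by linarith)]; ring
      · rw [abs_of_neg ha, abs_of_pos hb] at hba ⊢
        rw [abs_of_nonpos (by linarith)]; ring
    have h4 : |a| - |b| + |c| ≤ 1 := by rw [habs] at h3; exact h3
    have hb0 : (0:ℝ) < |b| := by
      rcases mul_neg_iff.mp hab with ⟨_, hb⟩ | ⟨_, hb⟩
      · exact abs_pos.mpr (ne_of_lt hb)
      · exact abs_pos.mpr (ne_of_gt hb)
    rcases le_or_gt |c| (2 * |b|) with hcase | hcase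
    · -- hard case
      set u := |c| / (2 * |b|) with hu
      clear_value u
      have hu0 : 0 ≤ u := by rw [hu]; positivity
      have hu1 : u ≤ 1 := by rw [hu, div_le_one (by positivity)]; linarith
      have e1 := hpt 1 u (by norm_num) (by rwa [abs_of_nonneg hu0])
      have e2 := hpt 1 (-u) (by norm_num) (by rw [abs_neg, abs_of_nonneg hu0]; exact hu1)
      rw [show a*1^2 + b*u^2 + c*1*u = (a + b*u^2) + c*u by ring] at e1
      rw [show a*1^2 + b*(-u)^2 + c*1*(-u) = (a + b*u^2) - c*u by ring] at e2
      have hv : |a + b*u^2| + |c*u| ≤ 1 := by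
        rw [abs_le] at e1 e2
        rcases abs_cases (a + b*u^2) with ⟨h, _⟩ | ⟨h, _⟩ <;>
          rcases abs_cases (c*u) with ⟨h2, _⟩ | ⟨h2, _⟩ <;> rw [h, h2] <;> linarith
      have hu2 : u^2 ≤ 1 := by nlinarith
      have hbu : |b| * u^2 ≤ |a| := le_trans (mul_le_of_le_one_right hb0.le hu2) hba
      have hveq : |a + b*u^2| = |a| - |b| * u^2 := by
        rcases mul_neg_iff.mp hab with ⟨ha, hb⟩ | ⟨ha, hb⟩
        · rw [abs_of_pos ha, abs_of_neg hb] at hbu ⊢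
          rw [abs_of_nonneg (by nlinarith)]; ring
        · rw [abs_of_neg ha, abs_of_pos hb] at hbu ⊢
          rw [abs_of_nonpos (by nlinarith)]; ring
      have hv' : |a| - |b| * u^2 + |c| * u ≤ 1 := by
        rw [hveq, abs_mul, abs_of_nonneg hu0] at hv; linarith
      have hbu2 : |b| * u^2 = |c|^2 / (4 * |b|) := by
        rw [hu]; field_simp; ring
      have hcu2 : |c| * u = |c|^2 / (2 * |b|) := by
        rw [hu]; field_simp
      have h6 : |a| + |c|^2/(4 * |b|) ≤ 1 := by
        rw [hbu2, hcu2] at hv'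
        have : |c|^2/(2 * |b|) = 2 * (|c|^2/(4 * |b|)) := by field_simp; ring
        linarith [this ▸ hv']
      have hkey : |c|^2 ≤ 4 * |b| *(1 - |a|) := by
        have h7 : |c|^2/(4 * |b|) ≤ 1 - |a| := by linarith
        have := (div_le_iff₀ (by positivity : (0:ℝ) < 4 * |b|)).mp h7
        linarith
      -- construct t
      have hs0 : (0:ℝ) ≤ 1 - |c|^2 := by nlinarith [abs_nonneg c]
      set s := Real.sqrt (1 - |c|^2) with hsdef
      have hs2 : s^2 = 1 - |c|^2 := Real.sq_sqrt hs0
      have hsnn : 0 ≤ s := Real.sqrt_nonneg _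
      clear_value s
      have hs1 : s ≤ 1 := by nlinarith [hs2, hsnn, sq_nonneg (s - 1), abs_nonneg c]
      have htγ : 4*((1+s)/2)*(1 - (1+s)/2) = |c|^2 := by linear_combination (-1) * hs2
      have hbig : |c|^2 ≤ 4 * |b| *(1 - |b|) := by nlinarith [mul_nonneg (abs_nonneg b) (sub_nonneg.mpr hba)]
      have hβt : |b| ≤ (1+s)/2 := by
        by_contra h
        push_neg at h
        nlinarith [mul_pos (by linarith : (0:ℝ) < |b| - (1+s)/2) (by linarith : (0:ℝ) < |b| + (1+s)/2 - 1)]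
      have hαt : |a| ≤ (1+s)/2 := by
        by_contra h
        push_neg at h
        nlinarith [mul_pos hb0 (by linarith : (0:ℝ) < |a| - (1+s)/2),
          mul_nonneg (sub_nonneg.mpr hβt) (by linarith : (0:ℝ) ≤ 1 - (1+s)/2)]
      have hγeq : 2 * Real.sqrt ((1+s)/2 * (1 - (1+s)/2)) = |c| := by
        have h8 : (1+s)/2 * (1 - (1+s)/2) = (|c|/2)^2 := by linear_combination htγ / 4
        rw [h8, Real.sqrt_sq (by positivity)]; ring
      refine ⟨(1+s)/2, by linarith, by linarith, ?_⟩
      have r1 := Real.rpow_le_rpow (abs_nonneg a) hαt (by norm_num : (0:ℝ) ≤ 4/3)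
      have r2 := Real.rpow_le_rpow (abs_nonneg b) hβt (by norm_num : (0:ℝ) ≤ 4/3)
      rw [gg, hγeq]
      linarith
    · -- |c| > 2|b| : easy
      refine ⟨1, by norm_num, le_refl 1, ?_⟩
      rw [gg_one]
      have l1 := rpow_le_self' (abs_nonneg a) ha1
      have l2 := rpow_le_self' (abs_nonneg b) hb1
      have l3 := rpow_le_self' (abs_nonneg c) hc1
      linarith

lemma core' (a b c : ℝ)
    (hpt : ∀ x y : ℝ, |x| ≤ 1 → |y| ≤ 1 → |a*x^2 + b*y^2 + c*x*y| ≤ 1) :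
    ∃ t : ℝ, 1/2 ≤ t ∧ t ≤ 1 ∧
      |a| ^ (4/3:ℝ) + |b| ^ (4/3:ℝ) + |c| ^ (4/3:ℝ) ≤ gg t := by
  rcases le_total |b| |a| with h | h
  · exact core h hpt
  · obtain ⟨t, h1, h2, h3⟩ := core h (fun x y hx hy => by
      have := hpt y x hy hx
      rwa [show a*y^2 + b*x^2 + c*y*x = b*x^2 + a*y^2 + c*x*y by ring] at this)
    exact ⟨t, h1, h2, by linarith⟩

noncomputable def FF (t : ℝ) : ℝ := gg t ^ (3/4:ℝ)

noncomputable def SS (a b c : ℝ) : Set ℝ :=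
  (fun p : ℝ × ℝ => |a * p.1 ^ 2 + b * p.2 ^ 2 + c * p.1 * p.2|) ''
    (Icc (-1 : ℝ) 1 ×ˢ Icc (-1 : ℝ) 1)

lemma mem_SS (a b c x y : ℝ) (hx : |x| ≤ 1) (hy : |y| ≤ 1) :
    |a * x ^ 2 + b * y ^ 2 + c * x * y| ∈ SS a b c := by
  rw [abs_le] at hx hy
  exact ⟨(x, y), ⟨⟨hx.1, hx.2⟩, ⟨hy.1, hy.2⟩⟩, rfl⟩

lemma bddSS (a b c : ℝ) : BddAbove (SS a b c) := by
  refine ⟨|a| + |b| + |c|, ?_⟩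
  rintro v ⟨⟨x, y⟩, ⟨hx, hy⟩, rfl⟩
  have hx' : |x| ≤ 1 := abs_le.mpr ⟨hx.1, hx.2⟩
  have hy' : |y| ≤ 1 := abs_le.mpr ⟨hy.1, hy.2⟩
  have hx2 : |x| ^ 2 ≤ 1 := by nlinarith [abs_nonneg x]
  have hy2 : |y| ^ 2 ≤ 1 := by nlinarith [abs_nonneg y]
  calc |a * x ^ 2 + b * y ^ 2 + c * x * y|
      ≤ |a * x ^ 2| + |b * y ^ 2| + |c * x * y| := abs_add_three _ _ _
    _ ≤ |a| + |b| + |c| := by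
        rw [abs_mul, abs_mul, abs_mul, abs_mul, abs_pow, abs_pow]
        have e1 : |a| * |x| ^ 2 ≤ |a| := mul_le_of_le_one_right (abs_nonneg a) hx2
        have e2 : |b| * |y| ^ 2 ≤ |b| := mul_le_of_le_one_right (abs_nonneg b) hy2
        have e3 : |c| * |x| * |y| ≤ |c| := by
          nlinarith [abs_nonneg c, abs_nonneg x, abs_nonneg y,
            mul_nonneg (abs_nonneg c) (abs_nonneg x)]
        linarith

lemma gg_nonneg {t : ℝ} (ht : 0 ≤ t) : 0 ≤ gg t := by
  have h1 := Real.rpow_nonneg ht (4/3:ℝ)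
  have h2 := Real.rpow_nonneg (by positivity : (0:ℝ) ≤ 2 * Real.sqrt (t * (1 - t))) (4/3:ℝ)
  unfold gg; linarith

lemma gg_le_three {t : ℝ} (ht1 : 1/2 ≤ t) (ht2 : t ≤ 1) : gg t ≤ 3 := by
  have h1 : t ^ (4/3:ℝ) ≤ 1 := Real.rpow_le_one (by linarith) ht2 (by norm_num)
  have hs : Real.sqrt (t * (1 - t)) ≤ 1/2 := by
    have h4 : t * (1 - t) ≤ (1/2:ℝ) ^ 2 := by nlinarith
    calc Real.sqrt (t * (1 - t)) ≤ Real.sqrt ((1/2:ℝ) ^ 2) := Real.sqrt_le_sqrt h4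
      _ = 1/2 := Real.sqrt_sq (by norm_num)
  have h2 : (2 * Real.sqrt (t * (1 - t))) ^ (4/3:ℝ) ≤ 1 :=
    Real.rpow_le_one (by positivity) (by linarith) (by norm_num)
  unfold gg; linarith

lemma FF_le_three {t : ℝ} (ht1 : 1/2 ≤ t) (ht2 : t ≤ 1) : FF t ≤ 3 := by
  have h0 : 0 ≤ gg t := gg_nonneg (by linarith)
  calc FF t ≤ (3:ℝ) ^ (3/4:ℝ) := Real.rpow_le_rpow h0 (gg_le_three ht1 ht2) (by norm_num)
    _ ≤ (3:ℝ) ^ (1:ℝ) := Real.rpow_le_rpow_of_exponent_le (by norm_num) (by norm_num)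
    _ = 3 := Real.rpow_one 3

/-- The optimal constant `D_{ℝ,2}(ℓ∞²)` in the polynomial Bohnenblust–Hille inequality
for real 2-homogeneous polynomials on ℓ∞² equals
`sup { (2t^{4/3} + (2√(t(1-t)))^{4/3})^{3/4} : t ∈ [1/2,1] } ≈ 1.8374`. -/
theorem D_R2_linf2_eq :
    sInf {D : ℝ | 0 ≤ D ∧ ∀ a b c : ℝ,
        (|a| ^ (4 / 3 : ℝ) + |b| ^ (4 / 3 : ℝ) + |c| ^ (4 / 3 : ℝ)) ^ (3 / 4 : ℝ) ≤
          D * sSup ((fun p : ℝ × ℝ => |a * p.1 ^ 2 + b * p.2 ^ 2 + c * p.1 * p.2|) ''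
            (Icc (-1 : ℝ) 1 ×ˢ Icc (-1 : ℝ) 1))} =
      sSup ((fun t : ℝ =>
        (2 * t ^ (4 / 3 : ℝ) + (2 * Real.sqrt (t * (1 - t))) ^ (4 / 3 : ℝ)) ^ (3 / 4 : ℝ)) ''
        Icc (1 / 2 : ℝ) 1) := by
  show sInf {D : ℝ | 0 ≤ D ∧ ∀ a b c : ℝ,
        (|a| ^ (4/3:ℝ) + |b| ^ (4/3:ℝ) + |c| ^ (4/3:ℝ)) ^ (3/4:ℝ) ≤
          D * sSup (SS a b c)} = sSup (FF '' Icc (1/2:ℝ) 1)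
  have hne : (FF '' Icc (1/2:ℝ) 1).Nonempty := ⟨FF 1, 1, by norm_num, rfl⟩
  have hbdd : BddAbove (FF '' Icc (1/2:ℝ) 1) := by
    refine ⟨3, ?_⟩
    rintro v ⟨t, ⟨ht1, ht2⟩, rfl⟩
    exact FF_le_three ht1 ht2
  set Dstar := sSup (FF '' Icc (1/2:ℝ) 1) with hDdef
  have hDstar_ge : ∀ t : ℝ, 1/2 ≤ t → t ≤ 1 → FF t ≤ Dstar :=
    fun t h1 h2 => le_csSup hbdd ⟨t, ⟨h1, h2⟩, rfl⟩
  have hDstar0 : 0 ≤ Dstar :=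
    le_trans (Real.rpow_nonneg (gg_nonneg (by norm_num)) _) (hDstar_ge 1 (by norm_num) le_rfl)
  have hmain : ∀ a b c : ℝ,
      (|a| ^ (4/3:ℝ) + |b| ^ (4/3:ℝ) + |c| ^ (4/3:ℝ)) ^ (3/4:ℝ) ≤ Dstar * sSup (SS a b c) := by
    intro a b c
    set S := sSup (SS a b c) with hSdef
    have haS : |a| ≤ S := by
      have := le_csSup (bddSS a b c) (mem_SS a b c 1 0 (by norm_num) (by norm_num))
      rwa [show a * 1 ^ 2 + b * 0 ^ 2 + c * 1 * 0 = a by ring] at this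
    have hbS : |b| ≤ S := by
      have := le_csSup (bddSS a b c) (mem_SS a b c 0 1 (by norm_num) (by norm_num))
      rwa [show a * 0 ^ 2 + b * 1 ^ 2 + c * 0 * 1 = b by ring] at this
    have hcS : |a + b + c| ≤ S := by
      have := le_csSup (bddSS a b c) (mem_SS a b c 1 1 (by norm_num) (by norm_num))
      rwa [show a * 1 ^ 2 + b * 1 ^ 2 + c * 1 * 1 = a + b + c by ring] at this
    have hS0 : (0:ℝ) ≤ S := le_trans (abs_nonneg a) haS
    rcases eq_or_lt_of_le hS0 with hS | hS
    · -- S = 0, so a = b = c = 0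
      have ha0 : a = 0 := abs_eq_zero.mp (le_antisymm (hS ▸ haS) (abs_nonneg a))
      have hb0 : b = 0 := abs_eq_zero.mp (le_antisymm (hS ▸ hbS) (abs_nonneg b))
      have hc0 : c = 0 := by
        have := le_antisymm (hS ▸ hcS) (abs_nonneg _)
        have := abs_eq_zero.mp this
        linarith
      rw [ha0, hb0, hc0, ← hS]
      simp [Real.zero_rpow]
    · -- S > 0
      have hpt : ∀ x y : ℝ, |x| ≤ 1 → |y| ≤ 1 →
          |(a/S) * x^2 + (b/S) * y^2 + (c/S) * x * y| ≤ 1 := by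
        intro x y hx hy
        rw [show (a/S) * x^2 + (b/S) * y^2 + (c/S) * x * y
            = (a * x ^ 2 + b * y ^ 2 + c * x * y)/S by ring,
          abs_div, abs_of_pos hS, div_le_one hS]
        exact le_csSup (bddSS a b c) (mem_SS a b c x y hx hy)
      obtain ⟨t, ht1, ht2, hsig⟩ := core' (a/S) (b/S) (c/S) hpt
      rw [abs_div, abs_div, abs_div, abs_of_pos hS,
        Real.div_rpow (abs_nonneg a) hS0, Real.div_rpow (abs_nonneg b) hS0,
        Real.div_rpow (abs_nonneg c) hS0, ← add_div, ← add_div] at hsig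
      have hSe : (0:ℝ) < S ^ (4/3:ℝ) := Real.rpow_pos_of_pos hS _
      have hsig' : |a| ^ (4/3:ℝ) + |b| ^ (4/3:ℝ) + |c| ^ (4/3:ℝ) ≤ gg t * S ^ (4/3:ℝ) :=
        (div_le_iff₀ hSe).mp hsig
      have hgg0 : 0 ≤ gg t := gg_nonneg (by linarith)
      have hsum0 : 0 ≤ |a| ^ (4/3:ℝ) + |b| ^ (4/3:ℝ) + |c| ^ (4/3:ℝ) := by positivity
      calc (|a| ^ (4/3:ℝ) + |b| ^ (4/3:ℝ) + |c| ^ (4/3:ℝ)) ^ (3/4:ℝ)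
          ≤ (gg t * S ^ (4/3:ℝ)) ^ (3/4:ℝ) := Real.rpow_le_rpow hsum0 hsig' (by norm_num)
        _ = gg t ^ (3/4:ℝ) * (S ^ (4/3:ℝ)) ^ (3/4:ℝ) := Real.mul_rpow hgg0 hSe.le
        _ = FF t * S := by
            rw [show ((S ^ (4/3:ℝ)) ^ (3/4:ℝ)) = S by rw [← Real.rpow_mul hS0]; norm_num]
            rfl
        _ ≤ Dstar * S := mul_le_mul_of_nonneg_right (hDstar_ge t ht1 ht2) hS0
  apply le_antisymm
  · exact csInf_le ⟨0, fun D hD => hD.1⟩ ⟨hDstar0, hmain⟩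
  · refine le_csInf ⟨Dstar, hDstar0, hmain⟩ ?_
    rintro D ⟨hD0, hD⟩
    refine csSup_le hne ?_
    rintro v ⟨t, ⟨ht1, ht2⟩, rfl⟩
    have hS1 : sSup (SS t (-t) (2 * Real.sqrt (t * (1 - t)))) ≤ 1 := by
      apply Real.sSup_le ?_ (by norm_num)
      rintro v ⟨⟨x, y⟩, ⟨hx, hy⟩, rfl⟩
      exact extremal_bound ht1 ht2 (abs_le.mpr ⟨hx.1, hx.2⟩) (abs_le.mpr ⟨hy.1, hy.2⟩)
    have hd := hD t (-t) (2 * Real.sqrt (t * (1 - t)))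
    have habs1 : |t| = t := abs_of_nonneg (by linarith)
    have habs2 : |(-t)| = t := by rw [abs_neg]; exact habs1
    have habs3 : |2 * Real.sqrt (t * (1 - t))| = 2 * Real.sqrt (t * (1 - t)) :=
      abs_of_nonneg (by positivity)
    rw [habs1, habs2, habs3] at hd
    have heq : FF t
        = (t ^ (4/3:ℝ) + t ^ (4/3:ℝ) + (2 * Real.sqrt (t * (1 - t))) ^ (4/3:ℝ)) ^ (3/4:ℝ) := by
      unfold FF gg; ring_nf
    calc FF t = (t ^ (4/3:ℝ) + t ^ (4/3:ℝ) + (2 * Real.sqrt (t * (1 - t))) ^ (4/3:ℝ)) ^ (3/4:ℝ) := heq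
      _ ≤ D * sSup (SS t (-t) (2 * Real.sqrt (t * (1 - t)))) := hd
      _ ≤ D * 1 := mul_le_mul_of_nonneg_left hS1 hD0
      _ = D := mul_one D
end

section
/- Let D* be the infimum of all constants D ≥ 0 such that for all real numbers a, b, c one has (|a|^{8/5} + |b|^{8/5} + |c|^{8/5})^{5/8} ≤ D · sup{|a x⁴ + b y⁴ + c x²y²| : (x,y) ∈ [−1,1]²}. Then D* = (2 + 3^{8/5})^{5/8} (≈ 3.610), and this value is attained: for (a,b,c) = (1,1,−3) the left-hand side equals D* times the supremum. -/
open Set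

private lemma bdd_img (a b c : ℝ) :
    BddAbove ((fun p : ℝ × ℝ =>
        |a * p.1 ^ 4 + b * p.2 ^ 4 + c * p.1 ^ 2 * p.2 ^ 2|) ''
      (Icc (-1 : ℝ) 1 ×ˢ Icc (-1 : ℝ) 1)) := by
  refine ⟨|a| + |b| + |c|, ?_⟩
  rintro _ ⟨⟨x, y⟩, ⟨hx, hy⟩, rfl⟩
  simp only [mem_Icc] at hx hy
  have hx1 : |x| ≤ 1 := abs_le.2 hx
  have hy1 : |y| ≤ 1 := abs_le.2 hy
  have hx4 : |x ^ 4| ≤ 1 := by rw [abs_pow]; exact pow_le_one₀ (abs_nonneg _) hx1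
  have hy4 : |y ^ 4| ≤ 1 := by rw [abs_pow]; exact pow_le_one₀ (abs_nonneg _) hy1
  have hx2 : |x ^ 2| ≤ 1 := by rw [abs_pow]; exact pow_le_one₀ (abs_nonneg _) hx1
  have hy2 : |y ^ 2| ≤ 1 := by rw [abs_pow]; exact pow_le_one₀ (abs_nonneg _) hy1
  calc |a * x ^ 4 + b * y ^ 4 + c * x ^ 2 * y ^ 2|
      ≤ |a * x ^ 4| + |b * y ^ 4| + |c * x ^ 2 * y ^ 2| := abs_add_three _ _ _
    _ ≤ |a| + |b| + |c| := by
        rw [abs_mul, abs_mul, abs_mul, abs_mul]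
        have h1 : |a| * |x ^ 4| ≤ |a| := by
          nlinarith [abs_nonneg a, abs_nonneg (x^4)]
        have h2 : |b| * |y ^ 4| ≤ |b| := by
          nlinarith [abs_nonneg b, abs_nonneg (y^4)]
        have h3 : |c| * |x ^ 2| * |y ^ 2| ≤ |c| := by
          nlinarith [abs_nonneg c, abs_nonneg (x^2), abs_nonneg (y^2),
            mul_nonneg (abs_nonneg c) (abs_nonneg (x^2))]
        linarith

private lemma key (a b c : ℝ) :
    (|a| ^ (8 / 5 : ℝ) + |b| ^ (8 / 5 : ℝ) + |c| ^ (8 / 5 : ℝ)) ^ (5 / 8 : ℝ) ≤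
      (2 + (3 : ℝ) ^ (8 / 5 : ℝ)) ^ (5 / 8 : ℝ) *
        sSup ((fun p : ℝ × ℝ =>
            |a * p.1 ^ 4 + b * p.2 ^ 4 + c * p.1 ^ 2 * p.2 ^ 2|) ''
          (Icc (-1 : ℝ) 1 ×ˢ Icc (-1 : ℝ) 1)) := by
  set s := sSup ((fun p : ℝ × ℝ =>
      |a * p.1 ^ 4 + b * p.2 ^ 4 + c * p.1 ^ 2 * p.2 ^ 2|) ''
    (Icc (-1 : ℝ) 1 ×ˢ Icc (-1 : ℝ) 1)) with hsdef
  have hbdd := bdd_img a b c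
  have hmem : ∀ x y : ℝ, x ∈ Icc (-1:ℝ) 1 → y ∈ Icc (-1:ℝ) 1 →
      |a * x ^ 4 + b * y ^ 4 + c * x ^ 2 * y ^ 2| ≤ s :=
    fun x y hx hy => le_csSup hbdd ⟨(x, y), ⟨hx, hy⟩, rfl⟩
  have h10 : (1:ℝ) ∈ Icc (-1:ℝ) 1 := by norm_num
  have h00 : (0:ℝ) ∈ Icc (-1:ℝ) 1 := by norm_num
  have ha : |a| ≤ s := by have := hmem 1 0 h10 h00; simpa using this
  have hb : |b| ≤ s := by have := hmem 0 1 h00 h10; simpa using this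
  have habc : |a + b + c| ≤ s := by have := hmem 1 1 h10 h10; simpa using this
  have hs0 : 0 ≤ s := le_trans (abs_nonneg a) ha
  have hc : |c| ≤ 3 * s := by
    have h1 : |c| = |(a + b + c) + (-a) + (-b)| := by congr 1; ring
    have h2 := abs_add_three (a + b + c) (-a) (-b)
    rw [abs_neg, abs_neg] at h2
    rw [h1]; linarith
  have p85 : (0:ℝ) ≤ 8/5 := by norm_num
  have h1 : |a| ^ (8/5 : ℝ) ≤ s ^ (8/5 : ℝ) :=
    Real.rpow_le_rpow (abs_nonneg _) ha p85
  have h2 : |b| ^ (8/5 : ℝ) ≤ s ^ (8/5 : ℝ) :=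
    Real.rpow_le_rpow (abs_nonneg _) hb p85
  have h3 : |c| ^ (8/5 : ℝ) ≤ (3:ℝ) ^ (8/5 : ℝ) * s ^ (8/5 : ℝ) := by
    have := Real.rpow_le_rpow (abs_nonneg _) hc p85
    rwa [Real.mul_rpow (by norm_num) hs0] at this
  have hsum : |a| ^ (8/5 : ℝ) + |b| ^ (8/5 : ℝ) + |c| ^ (8/5 : ℝ) ≤
      (2 + (3:ℝ) ^ (8/5 : ℝ)) * s ^ (8/5 : ℝ) := by nlinarith
  have hL0 : 0 ≤ |a| ^ (8/5 : ℝ) + |b| ^ (8/5 : ℝ) + |c| ^ (8/5 : ℝ) := by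
    positivity
  have := Real.rpow_le_rpow hL0 hsum (by norm_num : (0:ℝ) ≤ 5/8)
  calc (|a| ^ (8/5 : ℝ) + |b| ^ (8/5 : ℝ) + |c| ^ (8/5 : ℝ)) ^ (5/8 : ℝ)
      ≤ ((2 + (3:ℝ) ^ (8/5 : ℝ)) * s ^ (8/5 : ℝ)) ^ (5/8 : ℝ) := this
    _ = (2 + (3:ℝ) ^ (8/5 : ℝ)) ^ (5/8 : ℝ) * s := by
        rw [Real.mul_rpow (by positivity) (by positivity),
          ← Real.rpow_mul hs0]
        norm_num

private lemma sup_one :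
    sSup ((fun p : ℝ × ℝ =>
        |1 * p.1 ^ 4 + 1 * p.2 ^ 4 + (-3) * p.1 ^ 2 * p.2 ^ 2|) ''
      (Icc (-1 : ℝ) 1 ×ˢ Icc (-1 : ℝ) 1)) = 1 := by
  apply le_antisymm
  · apply csSup_le
    · exact ⟨_, ⟨(1, 0), ⟨by norm_num, by norm_num⟩, rfl⟩⟩
    · rintro _ ⟨⟨x, y⟩, ⟨hx, hy⟩, rfl⟩
      simp only [mem_Icc] at hx hy
      have hx2 : x ^ 2 ≤ 1 := by nlinarith [hx.1, hx.2]
      have hy2 : y ^ 2 ≤ 1 := by nlinarith [hy.1, hy.2]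
      have hx0 : 0 ≤ x ^ 2 := sq_nonneg x
      have hy0 : 0 ≤ y ^ 2 := sq_nonneg y
      rw [abs_le]
      constructor
      · nlinarith [sq_nonneg (x ^ 2 - y ^ 2), mul_nonneg (sub_nonneg.2 hx2) (sub_nonneg.2 hy2)]
      · nlinarith [sq_nonneg (x ^ 2 - y ^ 2), mul_nonneg hx0 hy0,
          mul_nonneg (sub_nonneg.2 hx2) (sub_nonneg.2 hy2),
          mul_nonneg hx0 (sub_nonneg.2 hy2), mul_nonneg hy0 (sub_nonneg.2 hx2)]
  · apply le_csSup (bdd_img 1 1 (-3))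
    exact ⟨(1, 0), ⟨by norm_num, by norm_num⟩, by norm_num⟩

/-- The optimal constant of the polynomial Bohnenblust–Hille inequality (m = 4,
exponent 8/5) restricted to the subspace `E = {a x⁴ + b y⁴ + c x²y²}` of
4-homogeneous polynomials on ℓ∞² equals `(2 + 3^{8/5})^{5/8} ≈ 3.610`, attained at
`(a,b,c) = (1,1,-3)`. -/
theorem D_R4_on_E_eq :
    sInf {D : ℝ | 0 ≤ D ∧ ∀ a b c : ℝ,
        (|a| ^ (8 / 5 : ℝ) + |b| ^ (8 / 5 : ℝ) + |c| ^ (8 / 5 : ℝ)) ^ (5 / 8 : ℝ) ≤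
          D * sSup ((fun p : ℝ × ℝ =>
              |a * p.1 ^ 4 + b * p.2 ^ 4 + c * p.1 ^ 2 * p.2 ^ 2|) ''
            (Icc (-1 : ℝ) 1 ×ˢ Icc (-1 : ℝ) 1))} =
      (2 + (3 : ℝ) ^ (8 / 5 : ℝ)) ^ (5 / 8 : ℝ) ∧
    (|(1 : ℝ)| ^ (8 / 5 : ℝ) + |(1 : ℝ)| ^ (8 / 5 : ℝ) +
        |(-3 : ℝ)| ^ (8 / 5 : ℝ)) ^ (5 / 8 : ℝ) =
      (2 + (3 : ℝ) ^ (8 / 5 : ℝ)) ^ (5 / 8 : ℝ) *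
        sSup ((fun p : ℝ × ℝ =>
            |1 * p.1 ^ 4 + 1 * p.2 ^ 4 + (-3) * p.1 ^ 2 * p.2 ^ 2|) ''
          (Icc (-1 : ℝ) 1 ×ˢ Icc (-1 : ℝ) 1)) := by
  have hD0 : (0:ℝ) ≤ (2 + (3 : ℝ) ^ (8 / 5 : ℝ)) ^ (5 / 8 : ℝ) := by positivity
  have hmemD : (2 + (3 : ℝ) ^ (8 / 5 : ℝ)) ^ (5 / 8 : ℝ) ∈
      {D : ℝ | 0 ≤ D ∧ ∀ a b c : ℝ,
        (|a| ^ (8 / 5 : ℝ) + |b| ^ (8 / 5 : ℝ) + |c| ^ (8 / 5 : ℝ)) ^ (5 / 8 : ℝ) ≤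
          D * sSup ((fun p : ℝ × ℝ =>
              |a * p.1 ^ 4 + b * p.2 ^ 4 + c * p.1 ^ 2 * p.2 ^ 2|) ''
            (Icc (-1 : ℝ) 1 ×ˢ Icc (-1 : ℝ) 1))} := ⟨hD0, key⟩
  have hval : (|(1 : ℝ)| ^ (8 / 5 : ℝ) + |(1 : ℝ)| ^ (8 / 5 : ℝ) +
      |(-3 : ℝ)| ^ (8 / 5 : ℝ)) ^ (5 / 8 : ℝ) =
      (2 + (3 : ℝ) ^ (8 / 5 : ℝ)) ^ (5 / 8 : ℝ) := by
    norm_num [Real.one_rpow]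

  constructor
  · apply le_antisymm
    · exact csInf_le ⟨0, fun D hD => hD.1⟩ hmemD
    · apply le_csInf ⟨_, hmemD⟩
      rintro D ⟨hD0', hD⟩
      have := hD 1 1 (-3)
      rw [sup_one, mul_one, hval] at this
      exact this
  · rw [sup_one, mul_one, hval]
end
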